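/- Let φ : ℝ^d × ℝ → ℝ be bounded and twice continuously differentiable with uniformly bounded partial derivatives up to order two. Let K_d : ℝ^d → ℝ be integrable with ∫ K_d(u) du = 1, ∫ u K_d(u) du = 0 and ∫ |u|² |K_d(u)| du < ∞, and let K̇ : ℝ → ℝ be integrable with ∫ K̇(v) dv = 0, ∫ v K̇(v) dv = −1 and ∫ v² |K̇(v)| dv < ∞. Then there exists a constant C such that for all h, h' ∈ (0, 1] and all (x, a) ∈ ℝ^d × ℝ: | (1/h') ∫∫ φ(x − h u, a − h' v) K_d(u) K̇(v) du dv − (∂φ/∂a)(x, a) | ≤ C (h²/h' + h'). -/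

import Mathlib

open MeasureTheory Filter Topology

lemma taylor2_aux {E : Type*} [NormedAddCommGroup E] [NormedSpace ℝ E] {F : E → ℝ}
    (hF : ContDiff ℝ 2 F) {B : ℝ} (hB : ∀ p, ‖iteratedFDeriv ℝ 2 F p‖ ≤ B) (p q : E) :
    |F q - F p - fderiv ℝ F p (q - p)| ≤ B * ‖q - p‖ ^ 2 := by
  have hB0 : 0 ≤ B := le_trans (norm_nonneg _) (hB p)
  have hd1 : Differentiable ℝ F := hF.differentiable (by simp)
  have hg : Differentiable ℝ (fderiv ℝ F) :=
    (hF.fderiv_right (m := 1) (by norm_num)).differentiable (by simp)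
  have hgd : ∀ z, ‖fderiv ℝ (fderiv ℝ F) z‖ ≤ B := by
    intro z
    refine ContinuousLinearMap.opNorm_le_bound _ hB0 fun w1 => ?_
    refine ContinuousLinearMap.opNorm_le_bound _ (by positivity) fun w2 => ?_
    have h2 : fderiv ℝ (fderiv ℝ F) z w1 w2 = iteratedFDeriv ℝ 2 F z ![w1, w2] := by
      rw [iteratedFDeriv_two_apply]; simp
    rw [h2]
    calc |iteratedFDeriv ℝ 2 F z ![w1, w2]|
        ≤ ‖iteratedFDeriv ℝ 2 F z‖ * ∏ i, ‖(![w1, w2]) i‖ :=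
          (iteratedFDeriv ℝ 2 F z).le_opNorm _
      _ = ‖iteratedFDeriv ℝ 2 F z‖ * (‖w1‖ * ‖w2‖) := by
          rw [Fin.prod_univ_two]; simp
      _ ≤ B * (‖w1‖ * ‖w2‖) := by
          apply mul_le_mul_of_nonneg_right (hB z) (by positivity)
      _ = B * ‖w1‖ * ‖w2‖ := by ring
  have hlip : ∀ z ∈ segment ℝ p q, ‖fderiv ℝ F z - fderiv ℝ F p‖ ≤ B * ‖q - p‖ := by
    intro z hz
    have h1 : ‖fderiv ℝ F z - fderiv ℝ F p‖ ≤ B * ‖z - p‖ :=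
      (convex_univ : Convex ℝ (Set.univ : Set E)).norm_image_sub_le_of_norm_fderiv_le
        (fun w _ => hg w) (fun w _ => hgd w) trivial trivial
    have h2 : ‖z - p‖ ≤ ‖q - p‖ := by
      obtain ⟨s, t, hs, ht, hst, rfl⟩ := hz
      have : s • p + t • q - p = t • (q - p) := by
        have hs1 : s = 1 - t := by linarith
        rw [hs1]; module
      rw [this, norm_smul, Real.norm_eq_abs, abs_of_nonneg ht]
      nlinarith [norm_nonneg (q - p)]
    calc ‖fderiv ℝ F z - fderiv ℝ F p‖ ≤ B * ‖z - p‖ := h1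
      _ ≤ B * ‖q - p‖ := mul_le_mul_of_nonneg_left h2 hB0
  have := (convex_segment p q).norm_image_sub_le_of_norm_fderiv_le'
    (fun z _ => hd1.differentiableAt) hlip (left_mem_segment ℝ p q) (right_mem_segment ℝ p q)
  calc |F q - F p - fderiv ℝ F p (q - p)| ≤ B * ‖q - p‖ * ‖q - p‖ := this
    _ = B * ‖q - p‖ ^ 2 := by ring

lemma prod_norm_sq_le {d : ℕ} {h h' : ℝ} (hh0 : 0 < h) (hh'0 : 0 < h') (u : Fin d → ℝ) (v : ℝ) :
    ‖((-(h • u), -(h' * v)) : (Fin d → ℝ) × ℝ)‖ ^ 2 ≤ h ^ 2 * ‖u‖ ^ 2 + h' ^ 2 * v ^ 2 := by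
  have hmk : ‖((-(h • u), -(h' * v)) : (Fin d → ℝ) × ℝ)‖ = max ‖-(h • u)‖ ‖-(h' * v)‖ := rfl
  rw [hmk]
  have e1 : ‖-(h • u)‖ = h * ‖u‖ := by
    rw [norm_neg, norm_smul, Real.norm_eq_abs, abs_of_pos hh0]
  have e2 : ‖-(h' * v)‖ = h' * |v| := by
    rw [norm_neg, Real.norm_eq_abs, abs_mul, abs_of_pos hh'0]
  rcases max_cases ‖-(h • u)‖ ‖-(h' * v)‖ with ⟨hm, _⟩ | ⟨hm, _⟩ <;> rw [hm]
  · rw [e1]; nlinarith [sq_nonneg v, norm_nonneg u, sq_abs v]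
  · rw [e2]; nlinarith [norm_nonneg u, sq_abs v]

/-- derivative-kernel bias expansion. For a bounded `C²` function `φ` with
uniformly bounded derivatives up to order two, a kernel `K_d` with unit mass, vanishing
first moment and finite second moment, and a derivative kernel `K̇` with `∫K̇ = 0`,
`∫ v K̇(v) dv = −1` and finite second absolute moment,
`(1/h') ∫∫ φ(x − h u, a − h' v) K_d(u) K̇(v) du dv` differs from `∂φ/∂a (x, a)` by at
most `C (h²/h' + h')`, uniformly in `(x, a)` and in `h, h' ∈ (0, 1]`. -/
theorem statement10 {d : ℕ} (φ : (Fin d → ℝ) → ℝ → ℝ)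
    (hφ_smooth : ContDiff ℝ 2 (fun p : (Fin d → ℝ) × ℝ => φ p.1 p.2))
    (Bφ : ℝ)
    (hφ_bdd : ∀ k : ℕ, k ≤ 2 → ∀ p : (Fin d → ℝ) × ℝ,
      ‖iteratedFDeriv ℝ k (fun q : (Fin d → ℝ) × ℝ => φ q.1 q.2) p‖ ≤ Bφ)
    (Kd : (Fin d → ℝ) → ℝ) (Kdot : ℝ → ℝ)
    (hKd_int : Integrable Kd (volume : Measure (Fin d → ℝ)))
    (hKdot_int : Integrable Kdot (volume : Measure ℝ))
    (hKd_mass : ∫ u, Kd u = 1)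
    (hKd_mean : ∀ i : Fin d, ∫ u, u i * Kd u = 0)
    (hKd_mom2 : Integrable (fun u => ‖u‖ ^ 2 * |Kd u|) (volume : Measure (Fin d → ℝ)))
    (hKdot_mass : ∫ v, Kdot v = 0)
    (hKdot_mean : ∫ v, v * Kdot v = -1)
    (hKdot_mom2 : Integrable (fun v => v ^ 2 * |Kdot v|) (volume : Measure ℝ)) :
    ∃ C : ℝ, ∀ h h' : ℝ, h ∈ Set.Ioc (0 : ℝ) 1 → h' ∈ Set.Ioc (0 : ℝ) 1 →
      ∀ (x : Fin d → ℝ) (a : ℝ),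
        |(1 / h') * (∫ u, ∫ v, φ (x - h • u) (a - h' * v) * Kd u * Kdot v)
            - deriv (fun a' => φ x a') a|
          ≤ C * (h ^ 2 / h' + h') := by
  set F : (Fin d → ℝ) × ℝ → ℝ := fun p => φ p.1 p.2 with hFdef
  have hBφ0 : 0 ≤ Bφ := le_trans (norm_nonneg _) (hφ_bdd 0 (by norm_num) (0, 0))
  set A0 : ℝ := ∫ v, |Kdot v| with hA0def
  set A2 : ℝ := ∫ v, v ^ 2 * |Kdot v| with hA2def
  set M0 : ℝ := ∫ u, |Kd u| with hM0def
  set M2 : ℝ := ∫ u, ‖u‖ ^ 2 * |Kd u| with hM2def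
  have hA00 : 0 ≤ A0 := integral_nonneg fun v => abs_nonneg _
  have hA20 : 0 ≤ A2 := integral_nonneg fun v => by positivity
  have hM00 : 0 ≤ M0 := integral_nonneg fun u => abs_nonneg _
  have hM20 : 0 ≤ M2 := integral_nonneg fun u => by positivity
  -- integrability of v * Kdot v
  have hvK : Integrable (fun v => v * Kdot v) (volume : Measure ℝ) := by
    refine Integrable.mono' (hKdot_int.abs.add hKdot_mom2)
      (aestronglyMeasurable_id.mul hKdot_int.aestronglyMeasurable)
      (Filter.Eventually.of_forall fun v => ?_)
    have h1 : |v| ≤ 1 + v ^ 2 := by nlinarith [sq_abs v, abs_nonneg v, sq_nonneg (|v| - 1)]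
    have : ‖v * Kdot v‖ = |v| * |Kdot v| := abs_mul _ _
    rw [this]
    calc |v| * |Kdot v| ≤ (1 + v ^ 2) * |Kdot v| :=
          mul_le_mul_of_nonneg_right h1 (abs_nonneg _)
      _ = |Kdot v| + v ^ 2 * |Kdot v| := by ring
  refine ⟨Bφ * (A0 * M2) + Bφ * (A2 * M0), ?_⟩
  rintro h h' ⟨hh0, hh1⟩ ⟨hh'0, hh'1⟩ x a
  set p0 : (Fin d → ℝ) × ℝ := (x, a) with hp0def
  set L : ((Fin d → ℝ) × ℝ) →L[ℝ] ℝ := fderiv ℝ F p0 with hLdef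
  set D : ℝ := L (0, 1) with hDdef
  have hd1 : Differentiable ℝ F := hφ_smooth.differentiable (by simp)
  -- deriv identification
  have hderiv : deriv (fun a' => φ x a') a = D := by
    have hι : HasDerivAt (fun a' : ℝ => ((x, a') : (Fin d → ℝ) × ℝ)) ((0 : Fin d → ℝ), (1 : ℝ)) a :=
      (hasDerivAt_const a x).prodMk (hasDerivAt_id a)
    have hc : HasDerivAt (fun a' => F (x, a')) (L (0, 1)) a :=
      (hd1 p0).hasFDerivAt.comp_hasDerivAt a hι
    exact hc.deriv
  -- remainder
  set R : (Fin d → ℝ) → ℝ → ℝ := fun u v =>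
    F (x - h • u, a - h' * v) - F p0 - L ((x - h • u, a - h' * v) - p0) with hRdef
  have hq : ∀ (u : Fin d → ℝ) (v : ℝ),
      ((x - h • u, a - h' * v) : (Fin d → ℝ) × ℝ) - p0 = (-(h • u), -(h' * v)) := by
    intro u v
    rw [hp0def, Prod.mk_sub_mk, Prod.mk.injEq]
    exact ⟨sub_sub_cancel_left _ _, sub_sub_cancel_left _ _⟩
  have hRbound : ∀ u v, |R u v| ≤ Bφ * (h ^ 2 * ‖u‖ ^ 2 + h' ^ 2 * v ^ 2) := by
    intro u v
    have ht := taylor2_aux hφ_smooth (hφ_bdd 2 le_rfl) p0 (x - h • u, a - h' * v)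
    have hnorm : ‖((x - h • u, a - h' * v) : (Fin d → ℝ) × ℝ) - p0‖ ^ 2
        ≤ h ^ 2 * ‖u‖ ^ 2 + h' ^ 2 * v ^ 2 := by
      rw [hq u v]
      exact prod_norm_sq_le hh0 hh'0 u v
    exact le_trans ht (mul_le_mul_of_nonneg_left hnorm hBφ0)
  have hRcont : Continuous (fun q : (Fin d → ℝ) × ℝ => R q.1 q.2) := by
    apply Continuous.sub
    apply Continuous.sub
    · exact hφ_smooth.continuous.comp
        (by fun_prop : Continuous fun q : (Fin d → ℝ) × ℝ => ((x - h • q.1, a - h' * q.2) : (Fin d → ℝ) × ℝ))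
    · exact continuous_const
    · exact L.continuous.comp (by fun_prop)
  -- integrability of R u v * Kdot v for fixed u
  have hRKint : ∀ u, Integrable (fun v => R u v * Kdot v) (volume : Measure ℝ) := by
    intro u
    refine Integrable.mono'
      ((hKdot_int.abs.const_mul (Bφ * (h ^ 2 * ‖u‖ ^ 2))).add
        (hKdot_mom2.const_mul (Bφ * h' ^ 2)))
      (((hRcont.comp (Continuous.prodMk_right u)).aestronglyMeasurable).mul
        hKdot_int.aestronglyMeasurable)
      (Filter.Eventually.of_forall fun v => ?_)
    rw [Real.norm_eq_abs, abs_mul]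
    calc |R u v| * |Kdot v| ≤ (Bφ * (h ^ 2 * ‖u‖ ^ 2 + h' ^ 2 * v ^ 2)) * |Kdot v| :=
          mul_le_mul_of_nonneg_right (hRbound u v) (abs_nonneg _)
      _ = Bφ * (h ^ 2 * ‖u‖ ^ 2) * |Kdot v| + Bφ * h' ^ 2 * (v ^ 2 * |Kdot v|) := by ring
  set ρ : (Fin d → ℝ) → ℝ := fun u => ∫ v, R u v * Kdot v with hρdef
  have hρmeas : AEStronglyMeasurable ρ (volume : Measure (Fin d → ℝ)) := by
    have : AEStronglyMeasurable (fun q : (Fin d → ℝ) × ℝ => R q.1 q.2 * Kdot q.2)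
        ((volume : Measure (Fin d → ℝ)).prod (volume : Measure ℝ)) :=
      hRcont.aestronglyMeasurable.mul hKdot_int.aestronglyMeasurable.comp_snd
    exact this.integral_prod_right'
  have hρbd : ∀ u, |ρ u| ≤ Bφ * (h ^ 2 * ‖u‖ ^ 2) * A0 + Bφ * h' ^ 2 * A2 := by
    intro u
    have h1 : |ρ u| ≤ ∫ v, |R u v * Kdot v| := by
      simpa only [Real.norm_eq_abs] using
        norm_integral_le_integral_norm (μ := (volume : Measure ℝ)) (fun v => R u v * Kdot v)
    have h2 : (∫ v, |R u v * Kdot v|)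
        ≤ ∫ v, (Bφ * (h ^ 2 * ‖u‖ ^ 2) * |Kdot v| + Bφ * h' ^ 2 * (v ^ 2 * |Kdot v|)) := by
      refine integral_mono (hRKint u).abs
        ((hKdot_int.abs.const_mul _).add (hKdot_mom2.const_mul _)) fun v => ?_
      rw [abs_mul]
      calc |R u v| * |Kdot v| ≤ (Bφ * (h ^ 2 * ‖u‖ ^ 2 + h' ^ 2 * v ^ 2)) * |Kdot v| :=
            mul_le_mul_of_nonneg_right (hRbound u v) (abs_nonneg _)
        _ = Bφ * (h ^ 2 * ‖u‖ ^ 2) * |Kdot v| + Bφ * h' ^ 2 * (v ^ 2 * |Kdot v|) := by ring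
    have h3 : (∫ v, (Bφ * (h ^ 2 * ‖u‖ ^ 2) * |Kdot v| + Bφ * h' ^ 2 * (v ^ 2 * |Kdot v|)))
        = Bφ * (h ^ 2 * ‖u‖ ^ 2) * A0 + Bφ * h' ^ 2 * A2 := by
      rw [integral_add (hKdot_int.abs.const_mul _) (hKdot_mom2.const_mul _),
        integral_const_mul, integral_const_mul]
    linarith
  -- inner integral computation
  have hinner : ∀ u, (∫ v, φ (x - h • u) (a - h' * v) * Kd u * Kdot v)
      = h' * D * Kd u + Kd u * ρ u := by
    intro u
    have key : (fun v => φ (x - h • u) (a - h' * v) * Kd u * Kdot v)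
        = fun v => ((φ x a + L (-(h • u), 0)) * Kd u) * Kdot v
            + ((-(h' * D)) * Kd u) * (v * Kdot v)
            + Kd u * (R u v * Kdot v) := by
      funext v
      have hsplit : L (-(h • u), -(h' * v)) = L (-(h • u), 0) + (-(h' * v)) * D := by
        have e : ((-(h • u), -(h' * v)) : (Fin d → ℝ) × ℝ)
            = (-(h • u), (0 : ℝ)) + (-(h' * v)) • ((0 : Fin d → ℝ), (1 : ℝ)) := by
          rw [Prod.smul_mk, Prod.mk_add_mk, Prod.mk.injEq]
          constructor <;> simp
        rw [e, map_add, _root_.map_smul, ← hDdef, smul_eq_mul]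
      have hφval : φ (x - h • u) (a - h' * v)
          = φ x a + L (-(h • u), 0) + (-(h' * v)) * D + R u v := by
        have hR : R u v = F (x - h • u, a - h' * v) - F p0
            - L ((x - h • u, a - h' * v) - p0) := rfl
        rw [hq u v, hsplit] at hR
        have hFq : F (x - h • u, a - h' * v) = φ (x - h • u) (a - h' * v) := rfl
        have hFp : F p0 = φ x a := rfl
        rw [hFq, hFp] at hR
        linarith
      rw [hφval]; ring
    rw [key]
    have i1 : Integrable (fun v => ((φ x a + L (-(h • u), 0)) * Kd u) * Kdot v)
        (volume : Measure ℝ) := hKdot_int.const_mul _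
    have i2 : Integrable (fun v => ((-(h' * D)) * Kd u) * (v * Kdot v))
        (volume : Measure ℝ) := hvK.const_mul _
    have i3 : Integrable (fun v => Kd u * (R u v * Kdot v))
        (volume : Measure ℝ) := (hRKint u).const_mul _
    have i12 : Integrable (fun v => ((φ x a + L (-(h • u), 0)) * Kd u) * Kdot v
        + ((-(h' * D)) * Kd u) * (v * Kdot v)) (volume : Measure ℝ) := i1.add i2
    rw [integral_add i12 i3, integral_add i1 i2,
      integral_const_mul, integral_const_mul, integral_const_mul,
      hKdot_mass, hKdot_mean]
    rw [hρdef]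
    ring
  -- outer integral
  have hKρint : Integrable (fun u => Kd u * ρ u) (volume : Measure (Fin d → ℝ)) := by
    refine Integrable.mono'
      ((hKd_mom2.const_mul (Bφ * h ^ 2 * A0)).add (hKd_int.abs.const_mul (Bφ * h' ^ 2 * A2)))
      (hKd_int.aestronglyMeasurable.mul hρmeas)
      (Filter.Eventually.of_forall fun u => ?_)
    rw [Real.norm_eq_abs, abs_mul]
    calc |Kd u| * |ρ u| ≤ |Kd u| * (Bφ * (h ^ 2 * ‖u‖ ^ 2) * A0 + Bφ * h' ^ 2 * A2) :=
          mul_le_mul_of_nonneg_left (hρbd u) (abs_nonneg _)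
      _ = Bφ * h ^ 2 * A0 * (‖u‖ ^ 2 * |Kd u|) + Bφ * h' ^ 2 * A2 * |Kd u| := by ring
  have houter : (∫ u, ∫ v, φ (x - h • u) (a - h' * v) * Kd u * Kdot v)
      = h' * D + ∫ u, Kd u * ρ u := by
    have e1 : (fun u => ∫ v, φ (x - h • u) (a - h' * v) * Kd u * Kdot v)
        = fun u => (h' * D) * Kd u + Kd u * ρ u := by
      funext u; rw [hinner u]
    rw [e1, integral_add (hKd_int.const_mul _) hKρint, integral_const_mul, hKd_mass, mul_one]
  -- error bound
  set Err : ℝ := ∫ u, Kd u * ρ u with hErrdef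
  have hErrbd : |Err| ≤ Bφ * h ^ 2 * A0 * M2 + Bφ * h' ^ 2 * A2 * M0 := by
    have h1 : |Err| ≤ ∫ u, |Kd u * ρ u| := by
      simpa only [Real.norm_eq_abs] using
        norm_integral_le_integral_norm (μ := (volume : Measure (Fin d → ℝ))) (fun u => Kd u * ρ u)
    have h2 : (∫ u, |Kd u * ρ u|)
        ≤ ∫ u, (Bφ * h ^ 2 * A0 * (‖u‖ ^ 2 * |Kd u|) + Bφ * h' ^ 2 * A2 * |Kd u|) := by
      refine integral_mono hKρint.abs
        ((hKd_mom2.const_mul _).add (hKd_int.abs.const_mul _)) fun u => ?_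
      rw [abs_mul]
      calc |Kd u| * |ρ u| ≤ |Kd u| * (Bφ * (h ^ 2 * ‖u‖ ^ 2) * A0 + Bφ * h' ^ 2 * A2) :=
            mul_le_mul_of_nonneg_left (hρbd u) (abs_nonneg _)
        _ = Bφ * h ^ 2 * A0 * (‖u‖ ^ 2 * |Kd u|) + Bφ * h' ^ 2 * A2 * |Kd u| := by ring
    have h3 : (∫ u, (Bφ * h ^ 2 * A0 * (‖u‖ ^ 2 * |Kd u|) + Bφ * h' ^ 2 * A2 * |Kd u|))
        = Bφ * h ^ 2 * A0 * M2 + Bφ * h' ^ 2 * A2 * M0 := by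
      rw [integral_add (hKd_mom2.const_mul _) (hKd_int.abs.const_mul _),
        integral_const_mul, integral_const_mul]
    linarith
  -- final
  rw [houter, hderiv]
  have hne : h' ≠ 0 := ne_of_gt hh'0
  have e : (1 / h') * (h' * D + Err) - D = Err / h' := by
    field_simp
    ring
  rw [e, abs_div, abs_of_pos hh'0]
  rw [div_le_iff₀ hh'0]
  have hq2 : h ^ 2 / h' * h' = h ^ 2 := by field_simp
  have hx : (h ^ 2 / h' + h') * h' = h ^ 2 + h' ^ 2 := by
    rw [add_mul, div_mul_cancel₀ _ hne]; ring
  have hgoal : (Bφ * (A0 * M2) + Bφ * (A2 * M0)) * (h ^ 2 / h' + h') * h'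
      = (Bφ * (A0 * M2) + Bφ * (A2 * M0)) * (h ^ 2 + h' ^ 2) := by
    rw [mul_assoc, hx]
  rw [hgoal]
  have hterm : Bφ * h ^ 2 * A0 * M2 + Bφ * h' ^ 2 * A2 * M0
      ≤ (Bφ * (A0 * M2) + Bφ * (A2 * M0)) * (h ^ 2 + h' ^ 2) := by
    have t1 : 0 ≤ Bφ * (A0 * M2) := by positivity
    have t2 : 0 ≤ Bφ * (A2 * M0) := by positivity
    have s1 : Bφ * (A0 * M2) * (h ^ 2) ≤ Bφ * (A0 * M2) * (h ^ 2 + h' ^ 2) :=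
      mul_le_mul_of_nonneg_left (le_add_of_nonneg_right (sq_nonneg h')) t1
    have s2 : Bφ * (A2 * M0) * (h' ^ 2) ≤ Bφ * (A2 * M0) * (h ^ 2 + h' ^ 2) :=
      mul_le_mul_of_nonneg_left (le_add_of_nonneg_left (sq_nonneg h)) t2
    have r1 : Bφ * h ^ 2 * A0 * M2 = Bφ * (A0 * M2) * (h ^ 2) := by ring
    have r2 : Bφ * h' ^ 2 * A2 * M0 = Bφ * (A2 * M0) * (h' ^ 2) := by ring
    linarith
  linarith
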